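/- Let K be a field, V a finite-dimensional K-vector space, and V₁, V₂ complementary subspaces of V (i.e. V₁ ∩ V₂ = 0 and V₁ + V₂ = V). Let W be a subgroup of GL(V) such that every element of W maps V₁ onto V₁ and V₂ onto V₂, and suppose W is generated by the set of its elements that are reflections (automorphisms whose fixed subspace has dimension finrank V − 1). Then every w ∈ W can be written as w = w₁ ∘ w₂, where w₁, w₂ ∈ W, w₁ fixes V₂ pointwise, and w₂ fixes V₁ pointwise. (This is the group-theoretic content of Lemma 2.7.8(2): a reflection group preserving a stable direct-sum decomposition is the product of its subgroups supported on the individual summands.) -/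
import Mathlib

open Module LinearMap

section aux
variable {K V : Type*} [Field K] [AddCommGroup V] [Module K V] [FiniteDimensional K V]

-- key: a reflection stabilizing both summands fixes one pointwise
lemma aux_key (V₁ V₂ : Submodule K V) (hc : IsCompl V₁ V₂) (s : V ≃ₗ[K] V)
    (h1 : V₁.map (s : V →ₗ[K] V) = V₁) (h2 : V₂.map (s : V →ₗ[K] V) = V₂)
    (hr : finrank K (ker ((s : V →ₗ[K] V) - LinearMap.id)) = finrank K V - 1) :
    (∀ v ∈ V₂, s v = v) ∨ (∀ v ∈ V₁, s v = v) := by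
  set f : V →ₗ[K] V := (s : V →ₗ[K] V) - LinearMap.id with hf
  rcases Nat.eq_zero_or_pos (finrank K V) with h0 | hpos
  · left
    have : Subsingleton V := (Module.finrank_zero_iff).mp h0
    intro v _; exact Subsingleton.elim _ _
  have hrange : finrank K (range f) = 1 := by
    have := f.finrank_range_add_finrank_ker
    omega
  by_contra hcon
  push_neg at hcon
  obtain ⟨⟨v₂, hv₂, hsv₂⟩, v₁, hv₁, hsv₁⟩ := hcon
  have hfv : ∀ (U : Submodule K V), U.map (s : V →ₗ[K] V) = U →
      ∀ v ∈ U, s v ≠ v → range f ≤ U := by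
    intro U hU v hv hsv
    have hfvU : f v ∈ U := by
      have hsvU : s v ∈ U := hU ▸ Submodule.mem_map_of_mem hv
      have : f v = s v - v := by simp [hf]
      rw [this]; exact U.sub_mem hsvU hv
    have hfv0 : f v ≠ 0 := by
      simp only [hf, LinearMap.sub_apply, LinearMap.id_apply, sub_ne_zero]
      exact hsv
    have hspan : Submodule.span K {f v} = range f := by
      apply Submodule.eq_of_le_of_finrank_le
      · rw [Submodule.span_singleton_le_iff_mem]; exact LinearMap.mem_range_self f v
      · rw [hrange, finrank_span_singleton hfv0]
    rw [← hspan, Submodule.span_singleton_le_iff_mem]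
    exact hfvU
  have hle1 : range f ≤ V₁ := hfv V₁ h1 v₁ hv₁ hsv₁
  have hle2 : range f ≤ V₂ := hfv V₂ h2 v₂ hv₂ hsv₂
  have : range f = ⊥ := le_bot_iff.mp (hc.inf_eq_bot ▸ le_inf hle1 hle2)
  rw [this] at hrange
  simp at hrange

end aux

/-- A reflection group preserving a direct-sum decomposition `V = V₁ ⊕ V₂` is the
product of its subgroups supported on the individual summands: every element
factors as `w₁ ∘ w₂` with `w₁` fixing `V₂` pointwise and `w₂` fixing `V₁`
pointwise (group-theoretic content of Lemma 2.7.8(2)). -/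
theorem stmt_7 {K V : Type*} [Field K] [AddCommGroup V] [Module K V]
    [FiniteDimensional K V]
    (V₁ V₂ : Submodule K V) (hc : IsCompl V₁ V₂)
    (W : Subgroup (V ≃ₗ[K] V))
    (hstab : ∀ w ∈ W, V₁.map ((w : V ≃ₗ[K] V) : V →ₗ[K] V) = V₁ ∧
      V₂.map ((w : V ≃ₗ[K] V) : V →ₗ[K] V) = V₂)
    (hgen : W = Subgroup.closure {s : V ≃ₗ[K] V | s ∈ W ∧
      Module.finrank K
          (LinearMap.ker ((s : V →ₗ[K] V) - LinearMap.id)) =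
        Module.finrank K V - 1}) :
    ∀ w ∈ W, ∃ w₁ w₂ : V ≃ₗ[K] V, w₁ ∈ W ∧ w₂ ∈ W ∧ w = w₁ * w₂ ∧
      (∀ v ∈ V₂, w₁ v = v) ∧ (∀ v ∈ V₁, w₂ v = v) := by
  -- elements of W map V₁ into V₁ and V₂ into V₂
  have hmem : ∀ w ∈ W, (∀ v ∈ V₁, w v ∈ V₁) ∧ (∀ v ∈ V₂, w v ∈ V₂) := by
    intro w hw
    exact ⟨fun v hv => (hstab w hw).1 ▸ Submodule.mem_map_of_mem hv,
      fun v hv => (hstab w hw).2 ▸ Submodule.mem_map_of_mem hv⟩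
  have mul_app : ∀ (f g : V ≃ₗ[K] V) (v : V), (f * g) v = f (g v) := fun _ _ _ => rfl
  -- commutation
  have hcomm : ∀ a ∈ W, ∀ b ∈ W, (∀ v ∈ V₂, a v = v) → (∀ v ∈ V₁, b v = v) →
      a * b = b * a := by
    intro a ha b hb hafix hbfix
    ext v
    obtain ⟨y, hy, z, hz, rfl⟩ := Submodule.mem_sup.mp
      (hc.sup_eq_top ▸ Submodule.mem_top (R := K) (x := v) : v ∈ V₁ ⊔ V₂)
    have hay : a y ∈ V₁ := (hmem a ha).1 y hy
    have hbz : b z ∈ V₂ := (hmem b hb).2 z hz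
    simp only [mul_app, map_add, hbfix y hy, hafix z hz,
      hafix (b z) hbz, hbfix (a y) hay]
  intro w hw
  rw [hgen] at hw
  induction hw using Subgroup.closure_induction with
  | mem s hs =>
    obtain ⟨hsW, hsr⟩ := hs
    rcases aux_key V₁ V₂ hc s (hstab s hsW).1 (hstab s hsW).2 hsr with h | h
    · exact ⟨s, 1, hsW, W.one_mem, (mul_one s).symm, h, fun v _ => rfl⟩
    · exact ⟨1, s, W.one_mem, hsW, (one_mul s).symm, fun v _ => rfl, h⟩
  | one => exact ⟨1, 1, W.one_mem, W.one_mem, (one_mul 1).symm,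
      fun v _ => rfl, fun v _ => rfl⟩
  | mul x y hx hy ihx ihy =>
    obtain ⟨a, b, haW, hbW, rfl, hafix, hbfix⟩ := ihx
    obtain ⟨c, d, hcW, hdW, rfl, hcfix, hdfix⟩ := ihy
    refine ⟨a * c, b * d, W.mul_mem haW hcW, W.mul_mem hbW hdW, ?_, ?_, ?_⟩
    · have h := hcomm c hcW b hbW hcfix hbfix
      calc a * b * (c * d) = a * (b * c) * d := by group
        _ = a * (c * b) * d := by rw [h]
        _ = a * c * (b * d) := by group
    · intro v hv
      simp only [mul_app, hcfix v hv, hafix v hv]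
    · intro v hv
      simp only [mul_app, hdfix v hv, hbfix v hv]
  | inv x hx ihx =>
    obtain ⟨a, b, haW, hbW, rfl, hafix, hbfix⟩ := ihx
    have hainv : ∀ v ∈ V₂, a⁻¹ v = v := fun v hv => by
      conv_lhs => rw [← hafix v hv]
      exact a.symm_apply_apply v
    have hbinv : ∀ v ∈ V₁, b⁻¹ v = v := fun v hv => by
      conv_lhs => rw [← hbfix v hv]
      exact b.symm_apply_apply v
    refine ⟨a⁻¹, b⁻¹, W.inv_mem haW, W.inv_mem hbW, ?_, hainv, hbinv⟩
    rw [mul_inv_rev, hcomm a⁻¹ (W.inv_mem haW) b⁻¹ (W.inv_mem hbW) hainv hbinv]
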